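/- Let K be a lattice polytope in ℝ^n. If mK ∩ ℤ^n = m·(K ∩ ℤ^n) holds for every positive integer m ≤ n−1, then mK ∩ ℤ^n = m·(K ∩ ℤ^n) holds for every positive integer m; i.e., K is solid. -/

import Mathlib

open Pointwise

/-- The set of lattice points (points with integer coordinates) of `ℝ^n`. -/
def latticePoints (n : ℕ) : Set (Fin n → ℝ) := {x | ∀ i, ∃ z : ℤ, x i = (z : ℝ)}

/-- The `k`-fold Minkowski sum `A + A + ⋯ + A` (`k` times) of a subset `A` of `ℝ^n`
(by convention the `0`-fold sum is `{0}`). -/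
def nsmulSet {n : ℕ} : ℕ → Set (Fin n → ℝ) → Set (Fin n → ℝ)
  | 0, _ => {0}
  | k + 1, A => A + nsmulSet k A

/-- A lattice polytope in `ℝ^n`: the convex hull of a finite nonempty set of lattice points. -/
def IsLatticePolytope {n : ℕ} (K : Set (Fin n → ℝ)) : Prop :=
  ∃ S : Set (Fin n → ℝ), S.Finite ∧ S.Nonempty ∧ S ⊆ latticePoints n ∧ K = convexHull ℝ S

/-
Write `z ∈ mK ∩ ℤⁿ` by Carathéodory as `z = ∑ μᵢ vᵢ` with affinely independent vertices `vᵢ` of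
`K` and `∑ μᵢ = m`. If some `μⱼ ≥ 1`, then `z - vⱼ ∈ (m-1)K ∩ ℤⁿ` and induction on `m` applies.
Otherwise `m < #{vᵢ} ≤ n + 1`, so `m = n` and the `vᵢ` span a full-dimensional lattice simplex.
Then `w = ∑ (1 - μᵢ) vᵢ = ∑ vᵢ - z` is a lattice point of `K`. If every `μᵢ ≥ 1/2`, then
`z - w = ∑ (2μᵢ - 1) vᵢ ∈ (n-1)K` and the hypothesis for `n - 1` applies. Otherwise, exchanging the
vertex with the smallest `μⱼ` for `w` writes `z` over a lattice simplex whose determinant is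
multiplied by `1 - μⱼ ∈ (0, 1)`; since lattice determinants are nonzero integers, this descent
stops.
-/

def latticeAddSubgroup (n : ℕ) : AddSubgroup (Fin n → ℝ) where
  carrier := latticePoints n
  zero_mem' _ := ⟨0, by simp⟩
  add_mem' ha hb i := by
    obtain ⟨a, ha⟩ := ha i
    obtain ⟨b, hb⟩ := hb i
    exact ⟨a + b, by simp [ha, hb]⟩
  neg_mem' ha i := by
    obtain ⟨a, ha⟩ := ha i
    exact ⟨-a, by simp [ha]⟩

section Minkowski

variable {n : ℕ} {A K : Set (Fin n → ℝ)}

lemma nsmulSet_subset_addSubgroup {H : AddSubgroup (Fin n → ℝ)} (hA : A ⊆ H) :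
    ∀ k, nsmulSet k A ⊆ H
  | 0 => by simp [nsmulSet, H.zero_mem]
  | k + 1 => by
    rintro _ ⟨a, ha, b, hb, rfl⟩
    exact H.add_mem (hA ha) (nsmulSet_subset_addSubgroup hA k hb)

lemma nsmulSet_succ_subset_smul (hK : Convex ℝ K) (hA : A ⊆ K) :
    ∀ k : ℕ, nsmulSet (k + 1) A ⊆ ((k + 1 : ℕ) : ℝ) • K
  | 0 => by
    rintro _ ⟨a, ha, b, rfl, rfl⟩
    simpa using hA ha
  | k + 1 => by
    rintro _ ⟨a, ha, b, hb, rfl⟩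
    rw [Nat.cast_succ, add_comm, hK.add_smul zero_le_one (by positivity), one_smul]
    exact Set.add_mem_add (hA ha) (nsmulSet_succ_subset_smul hK hA k hb)

lemma nsmulSet_subset_smul_inter (hK : Convex ℝ K) {m : ℕ} (hm : 0 < m) :
    nsmulSet m (K ∩ latticePoints n) ⊆ ((m : ℝ) • K) ∩ latticePoints n := by
  obtain ⟨k, rfl⟩ := Nat.exists_eq_add_of_lt hm
  rw [zero_add]
  exact Set.subset_inter (nsmulSet_succ_subset_smul hK Set.inter_subset_left k)
    (nsmulSet_subset_addSubgroup (H := latticeAddSubgroup n) Set.inter_subset_right _)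

lemma mem_nsmulSet_of_sub_mem_smul {k : ℕ}
    (hk : ((k : ℝ) • K) ∩ latticePoints n ⊆ nsmulSet k (K ∩ latticePoints n))
    {z u : Fin n → ℝ} (hz : z ∈ latticePoints n) (hu : u ∈ K ∩ latticePoints n)
    (hzu : z - u ∈ (k : ℝ) • K) : z ∈ nsmulSet (k + 1) (K ∩ latticePoints n) := by
  have hzuL : z - u ∈ latticePoints n := (latticeAddSubgroup n).sub_mem hz hu.2
  simpa [nsmulSet] using Set.add_mem_add hu (hk ⟨hzu, hzuL⟩)

end Minkowski

section Exchange

variable {ι E : Type*} [Fintype ι] [DecidableEq ι] [AddCommGroup E] [Module ℝ E]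

lemma Finset.sum_univ_update {M : Type*} [AddCommGroup M] (f : ι → M) (j : ι) (b : M) :
    ∑ i, Function.update f j b i = ∑ i, f i + (b - f j) := by
  rw [Finset.sum_update_of_mem (Finset.mem_univ j),
    Finset.sum_eq_add_sum_sdiff_singleton_of_mem (Finset.mem_univ j) f]
  abel

lemma sum_update_smul_update (μ : ι → ℝ) (v : ι → E) (j : ι) (a : ℝ) (x : E) :
    ∑ i, Function.update μ j a i • Function.update v j x i
      = ∑ i, μ i • v i + (a • x - μ j • v j) := by
  have h i : Function.update μ j a i • Function.update v j x i
      = Function.update (fun i => μ i • v i) j (a • x) i :=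
    Function.apply_update₂ (fun _ (c : ℝ) (y : E) => c • y) μ v j a x i
  simp_rw [h, Finset.sum_univ_update]

variable {μ c : ι → ℝ} {j : ι} {β : ℝ}

lemma sum_update_sub_smul_eq (hβ : μ j = β * c j) (hc : ∑ i, c i = 1) :
    ∑ i, Function.update (μ - β • c) j β i = ∑ i, μ i := by
  simp [Finset.sum_univ_update, Finset.sum_sub_distrib, ← Finset.mul_sum, hc, hβ]

lemma sum_smul_update_sub_smul_eq (hβ : μ j = β * c j) (v : ι → E) :
    ∑ i, Function.update (μ - β • c) j β i • Function.update v j (∑ i, c i • v i) i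
      = ∑ i, μ i • v i := by
  simp [sum_update_smul_update, sub_smul, Finset.sum_sub_distrib, Finset.smul_sum, smul_smul, hβ]

end Exchange

section Convex

variable {ι E : Type*} [Fintype ι] [AddCommGroup E] [Module ℝ E] {K : Set E}

lemma Convex.sum_smul_mem_smul [Nonempty ι] (hK : Convex ℝ K) {v : ι → E} (hv : ∀ i, v i ∈ K)
    {μ : ι → ℝ} (hμ : ∀ i, 0 ≤ μ i) : ∑ i, μ i • v i ∈ (∑ i, μ i) • K := by
  rcases (Finset.sum_nonneg fun i _ => hμ i).eq_or_lt with hzero | hpos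
  · have hμ0 : ∀ i, μ i = 0 := fun i =>
      (Finset.sum_eq_zero_iff_of_nonneg fun i _ => hμ i).1 hzero.symm i (Finset.mem_univ i)
    simp only [hμ0, zero_smul, Finset.sum_const_zero]
    exact ⟨_, hv (Classical.arbitrary ι), zero_smul ℝ _⟩
  · refine ⟨(∑ i, μ i)⁻¹ • ∑ i, μ i • v i, ?_, smul_inv_smul₀ hpos.ne' _⟩
    rw [Finset.smul_sum]
    simp_rw [smul_smul]
    exact hK.sum_mem (fun i _ => mul_nonneg (inv_nonneg.2 hpos.le) (hμ i))
      (by rw [← Finset.mul_sum, inv_mul_cancel₀ hpos.ne']) fun i _ => hv i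

lemma Convex.sum_smul_sub_mem_smul [Nonempty ι] (hK : Convex ℝ K) {v : ι → E}
    (hv : ∀ i, v i ∈ K) {μ : ι → ℝ} (hμ : ∀ i, 0 ≤ μ i) {j : ι} (hj : 1 ≤ μ j) :
    ∑ i, μ i • v i - v j ∈ (∑ i, μ i - 1) • K := by
  classical
  have hμ' : ∀ i, 0 ≤ Function.update μ j (μ j - 1) i :=
    (Function.forall_update_iff μ fun _ a => 0 ≤ a).2 ⟨by linarith, fun i _ => hμ i⟩
  have h := hK.sum_smul_mem_smul hv hμ'
  rwa [← Function.update_eq_self j v, sum_update_smul_update, Finset.sum_univ_update, sub_smul,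
    one_smul, sub_sub_cancel_left, sub_sub_cancel_left, ← sub_eq_add_neg, ← sub_eq_add_neg] at h

end Convex

/-- Rows `(v i, 1)`: `|det|` is `n!` times the volume of the simplex with vertices `v i`. -/
noncomputable def simplexMatrix {n : ℕ} (v : Fin (n + 1) → Fin n → ℝ) :
    Matrix (Fin (n + 1)) (Fin (n + 1)) ℝ :=
  Matrix.of fun i => Fin.snoc (v i) 1

section SimplexMatrix

variable {n : ℕ} {v : Fin (n + 1) → Fin n → ℝ}

lemma simplexMatrix_update_eq_updateRow {c : Fin (n + 1) → ℝ} (hc : ∑ i, c i = 1)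
    (j : Fin (n + 1)) :
    simplexMatrix (Function.update v j (∑ i, c i • v i))
      = (simplexMatrix v).updateRow j (∑ i, c i • simplexMatrix v i) := by
  ext i k
  rcases eq_or_ne i j with rfl | hij
  · refine Fin.lastCases ?_ (fun k => ?_) k <;>
      simp [simplexMatrix, Finset.sum_apply, hc]
  · simp [simplexMatrix, hij]

lemma det_simplexMatrix_update {c : Fin (n + 1) → ℝ} (hc : ∑ i, c i = 1) (j : Fin (n + 1)) :
    (simplexMatrix (Function.update v j (∑ i, c i • v i))).det = c j * (simplexMatrix v).det := by
  rw [simplexMatrix_update_eq_updateRow hc, Matrix.det_updateRow_sum, smul_eq_mul]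

lemma exists_intCast_eq_det_simplexMatrix (hv : ∀ i, v i ∈ latticePoints n) :
    ∃ d : ℤ, (simplexMatrix v).det = d := by
  suffices (simplexMatrix v).det ∈ (Int.castRingHom ℝ).range by simpa [eq_comm] using this
  rw [Matrix.det_apply]
  refine Subring.sum_mem _ fun σ _ => ?_
  rw [Units.smul_def]
  refine Subring.zsmul_mem _ (Subring.prod_mem _ fun i _ => ?_) _
  refine Fin.lastCases ?_ (fun k => ?_) i
  · exact ⟨1, by simp [simplexMatrix]⟩
  · obtain ⟨z, hz⟩ := hv (σ (Fin.castSucc k)) k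
    exact ⟨z, by simp [simplexMatrix, hz]⟩

lemma det_simplexMatrix_ne_zero (hv : AffineIndependent ℝ v) : (simplexMatrix v).det ≠ 0 := by
  intro hdet
  obtain ⟨g, hg0, hg⟩ := Matrix.exists_vecMul_eq_zero_iff.mpr hdet
  have hcol k : ∑ i, g i * simplexMatrix v i k = 0 := by
    simpa [Matrix.vecMul, dotProduct] using congrFun hg k
  have hsum : ∑ i, g i = 0 := by simpa [simplexMatrix] using hcol (Fin.last n)
  have hcomb : ∑ i, g i • v i = 0 := by
    funext k
    simpa [simplexMatrix] using hcol (Fin.castSucc k)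
  exact hg0 (funext fun i => hv.eq_zero_of_sum_eq_zero hsum hcomb i (Finset.mem_univ i))

end SimplexMatrix

section Simplex

variable {n : ℕ} {K : Set (Fin n → ℝ)} {v : Fin (n + 1) → Fin n → ℝ} {μ : Fin (n + 1) → ℝ}

lemma sum_one_sub_smul_mem (hK : Convex ℝ K) (hv : ∀ i, v i ∈ K ∩ latticePoints n)
    (hμ1 : ∀ i, μ i ≤ 1) (hμn : ∑ i, μ i = n) (hz : ∑ i, μ i • v i ∈ latticePoints n) :
    ∑ i, (1 - μ i) • v i ∈ K ∩ latticePoints n := by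
  have hc : ∑ i, (1 - μ i) = 1 := by simp [Finset.sum_sub_distrib, hμn]
  refine ⟨hK.sum_mem (fun i _ => sub_nonneg.2 (hμ1 i)) hc fun i _ => (hv i).1, ?_⟩
  rw [show ∑ i, (1 - μ i) • v i = ∑ i, v i - ∑ i, μ i • v i by
    simp [sub_smul, Finset.sum_sub_distrib]]
  exact (latticeAddSubgroup n).sub_mem ((latticeAddSubgroup n).sum_mem fun i _ => (hv i).2) hz

lemma exists_vertex_exchange (hK : Convex ℝ K) (hn : 0 < n) (hv : ∀ i, v i ∈ K ∩ latticePoints n)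
    (hμ : ∀ i, 0 ≤ μ i) (hμ1 : ∀ i, μ i < 1) (hμn : ∑ i, μ i = n)
    (hz : ∑ i, μ i • v i ∈ latticePoints n) :
    ∃ (v' : Fin (n + 1) → Fin n → ℝ) (μ' : Fin (n + 1) → ℝ) (t : ℝ),
      (∀ i, v' i ∈ K ∩ latticePoints n) ∧ (∀ i, 0 ≤ μ' i) ∧ ∑ i, μ' i = n ∧
      ∑ i, μ' i • v' i = ∑ i, μ i • v i ∧ 0 < t ∧ t < 1 ∧
      (simplexMatrix v').det = t * (simplexMatrix v).det := by
  set c : Fin (n + 1) → ℝ := fun i => 1 - μ i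
  have hc : ∑ i, c i = 1 := by simp [c, Finset.sum_sub_distrib, hμn]
  have hw := sum_one_sub_smul_mem hK hv (fun i => (hμ1 i).le) hμn hz
  obtain ⟨j, -, hj⟩ := Finset.exists_min_image Finset.univ μ Finset.univ_nonempty
  have hcj : c j < 1 := by
    have : Nontrivial (Fin (n + 1)) := Fin.nontrivial_iff_two_le.2 (by omega)
    obtain ⟨j', hj'⟩ := exists_ne j
    rw [← hc]
    exact Finset.single_lt_sum hj' (Finset.mem_univ j) (Finset.mem_univ j')
      (sub_pos.2 (hμ1 j')) fun i _ _ => sub_nonneg.2 (hμ1 i).le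
  have hcj0 : 0 < c j := sub_pos.2 (hμ1 j)
  set β := μ j / c j
  have hβ : μ j = β * c j := (div_mul_cancel₀ _ hcj0.ne').symm
  -- Since `μ j = β * c j`, rewriting `∑ μ i • v i` as `β • w + ∑ (μ i - β * c i) • v i` with
  -- `w = ∑ c i • v i` makes `v j` drop out; minimality of `μ j` keeps the new coefficients `≥ 0`.
  refine ⟨Function.update v j (∑ i, c i • v i), Function.update (μ - β • c) j β, c j,
    (Function.forall_update_iff v fun _ x => x ∈ K ∩ latticePoints n).2 ⟨hw, fun i _ => hv i⟩,
    (Function.forall_update_iff _ fun _ x => 0 ≤ x).2 ⟨div_nonneg (hμ j) hcj0.le, fun i _ => ?_⟩,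
    by rw [sum_update_sub_smul_eq hβ hc, hμn], sum_smul_update_sub_smul_eq hβ v, hcj0, hcj,
    det_simplexMatrix_update hc j⟩
  have := hj i (Finset.mem_univ i)
  simp only [Pi.sub_apply, Pi.smul_apply, smul_eq_mul, c]
  nlinarith [div_nonneg (hμ j) hcj0.le]

theorem sum_smul_mem_nsmulSet_of_simplex (hK : Convex ℝ K) (hn : 0 < n)
    (hsolid : (((n - 1 : ℕ) : ℝ) • K) ∩ latticePoints n ⊆ nsmulSet (n - 1) (K ∩ latticePoints n))
    (hv : ∀ i, v i ∈ K ∩ latticePoints n) (hdet : (simplexMatrix v).det ≠ 0)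
    (hμ : ∀ i, 0 ≤ μ i) (hμn : ∑ i, μ i = n) (hz : ∑ i, μ i • v i ∈ latticePoints n) :
    ∑ i, μ i • v i ∈ nsmulSet n (K ∩ latticePoints n) := by
  obtain ⟨d, hd⟩ := exists_intCast_eq_det_simplexMatrix fun i => (hv i).2
  obtain ⟨N, hN⟩ : ∃ N, d.natAbs = N := ⟨_, rfl⟩
  induction N using Nat.strong_induction_on generalizing d v μ with | _ N ih => ?_
  have hcast : ((n - 1 : ℕ) : ℝ) = n - 1 := by rw [Nat.cast_sub hn, Nat.cast_one]
  have hpeel : ∀ u ∈ K ∩ latticePoints n, ∑ i, μ i • v i - u ∈ ((n - 1 : ℕ) : ℝ) • K →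
      ∑ i, μ i • v i ∈ nsmulSet n (K ∩ latticePoints n) := fun u hu hzu => by
    simpa [Nat.sub_add_cancel hn] using mem_nsmulSet_of_sub_mem_smul hsolid hz hu hzu
  by_cases hbig : ∃ j, 1 ≤ μ j
  · obtain ⟨j, hj⟩ := hbig
    refine hpeel (v j) (hv j) ?_
    simpa [hμn, hcast] using hK.sum_smul_sub_mem_smul (fun i => (hv i).1) hμ hj
  push Not at hbig
  by_cases hhalf : ∀ i, 1 / 2 ≤ μ i
  · refine hpeel _ (sum_one_sub_smul_mem hK hv (fun i => (hbig i).le) hμn hz) ?_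
    have hsum : ∑ i, (2 * μ i - 1) = (n : ℝ) - 1 := by
      rw [Finset.sum_sub_distrib, ← Finset.mul_sum, hμn, Finset.sum_const, Finset.card_univ,
        Fintype.card_fin, nsmul_one, Nat.cast_succ]
      ring
    rw [← Finset.sum_sub_distrib, hcast, ← hsum]
    simp_rw [← sub_smul, sub_sub_eq_add_sub, ← two_mul]
    exact hK.sum_smul_mem_smul (fun i => (hv i).1) fun i => by linarith [hhalf i]
  obtain ⟨v', μ', t, hv', hμ', hμ'n, hz', ht0, ht1, hdet'⟩ :=
    exists_vertex_exchange hK hn hv hμ hbig hμn hz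
  obtain ⟨d', hd'⟩ := exists_intCast_eq_det_simplexMatrix fun i => (hv' i).2
  have hd0 : (d : ℝ) ≠ 0 := hd ▸ hdet
  have hlt : d'.natAbs < N := by
    have : |(d' : ℝ)| < |(d : ℝ)| := by
      rw [← hd', hdet', hd, abs_mul, abs_of_pos ht0]
      exact mul_lt_of_lt_one_left (abs_pos.2 hd0) ht1
    rw [← hN]
    zify
    exact_mod_cast this
  rw [← hz'] at hz ⊢
  exact ih _ hlt hv' (by rw [hdet', hd]; exact mul_ne_zero ht0.ne' hd0) hμ' hμ'n hz d' hd' rfl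

end Simplex

lemma sub_mem_or_simplex_of_mem_smul_convexHull {n m : ℕ} (hnm : n ≤ m) (hm : 0 < m)
    {S : Set (Fin n → ℝ)} {z : Fin n → ℝ} (hz : z ∈ (m : ℝ) • convexHull ℝ S) :
    (∃ u ∈ S, z - u ∈ ((m - 1 : ℕ) : ℝ) • convexHull ℝ S) ∨
      m = n ∧ ∃ (v : Fin (n + 1) → Fin n → ℝ) (μ : Fin (n + 1) → ℝ), (∀ i, v i ∈ S) ∧
        AffineIndependent ℝ v ∧ (∀ i, 0 ≤ μ i) ∧ ∑ i, μ i = n ∧ z = ∑ i, μ i • v i := by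
  obtain ⟨x, hx, rfl⟩ := hz
  obtain ⟨ι, _, p, w, hpS, hp, hw0, hw1, rfl⟩ := eq_pos_convex_span_of_mem_convexHull hx
  have hpS' i : p i ∈ S := hpS ⟨i, rfl⟩
  set μ : ι → ℝ := fun i => m * w i
  have hμ0 i : 0 ≤ μ i := mul_nonneg m.cast_nonneg (hw0 i).le
  have hμm : ∑ i, μ i = m := by rw [← Finset.mul_sum, hw1, mul_one]
  have hz : (m : ℝ) • ∑ i, w i • p i = ∑ i, μ i • p i := by
    simp only [Finset.smul_sum, smul_smul, μ]
  have : Nonempty ι := by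
    by_contra hι
    simp [not_nonempty_iff.1 hι] at hw1
  simp only [hz]
  by_cases hbig : ∃ j, 1 ≤ μ j
  · obtain ⟨j, hj⟩ := hbig
    refine .inl ⟨p j, hpS' j, ?_⟩
    have := (convex_convexHull ℝ S).sum_smul_sub_mem_smul
      (fun i => subset_convexHull ℝ S (hpS' i)) hμ0 hj
    rwa [hμm, ← Nat.cast_one, ← Nat.cast_sub hm] at this
  push Not at hbig
  have hle : Fintype.card ι ≤ n + 1 := by
    have := (Submodule.finrank_le (vectorSpan ℝ (Set.range p))).trans_eq (Module.finrank_fin_fun ℝ)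
    have := hp.card_le_finrank_succ
    omega
  have hlt : m < Fintype.card ι := by
    have : (m : ℝ) < Fintype.card ι := by
      rw [← hμm, ← Finset.card_univ, ← nsmul_one, ← Finset.sum_const]
      exact Finset.sum_lt_sum_of_nonempty Finset.univ_nonempty fun i _ => hbig i
    exact_mod_cast this
  obtain rfl : m = n := by omega
  let e : Fin (m + 1) ≃ ι := (Fintype.equivFinOfCardEq (by omega)).symm
  refine .inr ⟨rfl, p ∘ e, μ ∘ e, fun i => hpS' _, hp.comp_embedding e.toEmbedding,
    fun i => hμ0 _, (Equiv.sum_comp e μ).trans hμm, ?_⟩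
  exact (Equiv.sum_comp e fun i => μ i • p i).symm

/-- Let `K` be a lattice polytope in `ℝ^n`.  If `mK ∩ ℤ^n = m(K ∩ ℤ^n)` holds for every
positive integer `m ≤ n - 1`, then it holds for every positive integer `m`; that is,
`K` is solid. -/
theorem solid_of_small_dilates (n : ℕ) (K : Set (Fin n → ℝ)) (hK : IsLatticePolytope K)
    (h : ∀ m : ℕ, 0 < m → m ≤ n - 1 →
      ((m : ℝ) • K) ∩ latticePoints n = nsmulSet m (K ∩ latticePoints n)) :
    ∀ m : ℕ, 0 < m →
      ((m : ℝ) • K) ∩ latticePoints n = nsmulSet m (K ∩ latticePoints n) := by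
  obtain ⟨S, -, -, hSL, rfl⟩ := hK
  have hconv := convex_convexHull ℝ S
  have hSK {u} (hu : u ∈ S) : u ∈ convexHull ℝ S ∩ latticePoints n :=
    ⟨subset_convexHull ℝ S hu, hSL hu⟩
  suffices hsub : ∀ m : ℕ, ((m : ℝ) • convexHull ℝ S) ∩ latticePoints n ⊆
      nsmulSet m (convexHull ℝ S ∩ latticePoints n) from
    fun m hm => (hsub m).antisymm (nsmulSet_subset_smul_inter hconv hm)
  intro m
  induction m using Nat.strong_induction_on with | _ m ih => ?_
  rcases Nat.eq_zero_or_pos m with rfl | hm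
  · exact fun z hz => Set.zero_smul_set_subset (convexHull ℝ S) (by simpa using hz.1)
  rcases le_or_gt m (n - 1) with hmn | hnm
  · exact (h m hm hmn).le
  rintro z ⟨hz, hzL⟩
  rcases sub_mem_or_simplex_of_mem_smul_convexHull (by omega) hm hz with
    ⟨u, huS, hzu⟩ | ⟨rfl, v, μ, hvS, hv, hμ, hμn, rfl⟩
  · simpa [Nat.sub_add_cancel hm] using
      mem_nsmulSet_of_sub_mem_smul (ih (m - 1) (by omega)) hzL (hSK huS) hzu
  · exact sum_smul_mem_nsmulSet_of_simplex hconv hm (ih _ (by omega)) (fun i => hSK (hvS i))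
      (det_simplexMatrix_ne_zero hv) hμ hμn hzL
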